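/- For any prime p > 3, sum_{k=1}^{p-1} sum_{1 ≤ i < j ≤ k} (1/(i j^2) + 1/(i^2 j)) ≡ 0 (mod p). -/

import Mathlib

/-!
Writing `a m` for the inverse of `m` modulo `p`, swapping the order of summation turns the sum into
`∑_{i<j≤p-1} (p - j) (a_i a_j² + a_i² a_j) ≡ -∑_{i<j} (a_i a_j + a_i²)`, because `j a_j = 1`.
Both pieces are combinations of the power sums `∑ a_i = ∑ x⁻¹` and `∑ a_i² = ∑ x⁻²` over the
nonzero residues, which vanish for `p > 3`. To pass from `ℚ` to `ZMod p`, the sum is realised in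
`ℤ_[p]` with `Ring.inverse` in place of `m⁻¹`: its image in `ℚ_[p]` is the rational sum and its
image under `toZMod` is the sum mod `p`, so it lies in the maximal ideal `p ℤ_[p]`.
-/

open Finset
open scoped Ring

def nestedPairSum {R : Type*} [CommSemiring R] (a : ℕ → R) (n : ℕ) : R :=
  ∑ k ∈ Icc 1 n, ∑ i ∈ Icc 1 k, ∑ j ∈ Icc (i + 1) k, (a i * a j ^ 2 + a i ^ 2 * a j)

theorem map_nestedPairSum {R S F : Type*} [CommSemiring R] [CommSemiring S] [FunLike F R S]
    [RingHomClass F R S] (f : F) (a : ℕ → R) (n : ℕ) :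
    f (nestedPairSum a n) = nestedPairSum (f ∘ a) n := by
  simp only [nestedPairSum, map_sum, map_add, map_mul, map_pow, Function.comp_apply]

theorem nestedPairSum_congr {R : Type*} [CommSemiring R] {a b : ℕ → R} {n : ℕ}
    (h : ∀ m ∈ Icc 1 n, a m = b m) : nestedPairSum a n = nestedPairSum b n := by
  refine sum_congr rfl fun k hk => sum_congr rfl fun i hi => sum_congr rfl fun j hj => ?_
  simp only [mem_Icc] at hk hi hj
  rw [h i (by simp only [mem_Icc]; omega), h j (by simp only [mem_Icc]; omega)]

theorem nestedPairSum_inv_eq_sum_one_div {K : Type*} [Field K] (n : ℕ) :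
    nestedPairSum (fun m => (m : K)⁻¹) n = ∑ k ∈ Icc 1 n, ∑ i ∈ Icc 1 k,
      ∑ j ∈ Icc (i + 1) k, (1 / ((i : K) * (j : K) ^ 2) + 1 / ((i : K) ^ 2 * j)) := by
  simp only [nestedPairSum, one_div, mul_inv, inv_pow]

theorem sum_Icc_sum_Icc_sum_Icc_eq_sum_nsmul {M : Type*} [AddCommMonoid M] (n : ℕ)
    (g : ℕ → ℕ → M) :
    ∑ k ∈ Icc 1 n, ∑ i ∈ Icc 1 k, ∑ j ∈ Icc (i + 1) k, g i j =
      ∑ i ∈ Icc 1 n, ∑ j ∈ Icc (i + 1) n, (n + 1 - j) • g i j := by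
  rw [sum_comm' (t' := Icc 1 n) (s' := fun i => Icc i n)
    (fun k i => by simp only [mem_Icc]; omega)]
  refine sum_congr rfl fun i _ => ?_
  rw [sum_comm' (t' := Icc (i + 1) n) (s' := fun j => Icc j n)
    (fun k j => by simp only [mem_Icc]; omega)]
  simp only [sum_const, Nat.card_Icc]

theorem two_mul_sum_Icc_sum_Icc_mul {R : Type*} [CommRing R] (a : ℕ → R) (n : ℕ) :
    2 * ∑ i ∈ Icc 1 n, ∑ j ∈ Icc (i + 1) n, a i * a j =
      (∑ i ∈ Icc 1 n, a i) ^ 2 - ∑ i ∈ Icc 1 n, a i ^ 2 := by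
  induction n with
  | zero => simp
  | succ n ih =>
    have hsplit : ∀ i ∈ Icc 1 n, ∑ j ∈ Icc (i + 1) (n + 1), a i * a j =
        ∑ j ∈ Icc (i + 1) n, a i * a j + a i * a (n + 1) := fun i hi =>
      sum_Icc_succ_top (by simp only [mem_Icc] at hi; omega) _
    rw [sum_Icc_succ_top (by omega) (fun i => ∑ j ∈ Icc (i + 1) (n + 1), a i * a j),
      sum_congr rfl hsplit, Icc_eq_empty_of_lt (by omega : n + 1 < n + 1 + 1), sum_empty,
      sum_add_distrib, ← sum_mul, sum_Icc_succ_top (by omega) a,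
      sum_Icc_succ_top (by omega) (a · ^ 2)]
    linear_combination ih

section ZModP

variable {p : ℕ} [hp : Fact p.Prime]

theorem natCast_ne_zero_of_mem_Icc {i : ℕ} (hi : i ∈ Icc 1 (p - 1)) : (i : ZMod p) ≠ 0 := by
  rw [Ne, ZMod.natCast_eq_zero_iff]
  simp only [mem_Icc] at hi
  exact Nat.not_dvd_of_pos_of_lt (by omega) (by omega)

theorem sum_Icc_natCast_eq_sum_univ {M : Type*} [AddCommMonoid M] (f : ZMod p → M)
    (hf : f 0 = 0) : ∑ i ∈ Icc 1 (p - 1), f i = ∑ x, f x := by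
  rw [← sum_erase univ hf]
  refine sum_nbij' (fun i => (i : ZMod p)) ZMod.val (fun i hi => ?_) (fun x hx => ?_)
    (fun i hi => ?_) (fun x _ => ZMod.natCast_zmod_val x) (fun _ _ => rfl)
  · simpa using natCast_ne_zero_of_mem_Icc hi
  · have := ZMod.val_lt x
    have : x.val ≠ 0 := by simpa [ZMod.val_eq_zero] using hx
    simp only [mem_Icc]; omega
  · simp only [mem_Icc] at hi
    exact ZMod.val_cast_of_lt (by omega)

theorem sum_Icc_inv_pow_eq_zero {m : ℕ} (hm0 : 0 < m) (hm : m < p - 1) :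
    ∑ i ∈ Icc 1 (p - 1), (i : ZMod p)⁻¹ ^ m = 0 := by
  rw [sum_Icc_natCast_eq_sum_univ (fun x => x⁻¹ ^ m) (by simp [hm0.ne'])]
  rw [Fintype.sum_equiv (Equiv.inv _) (fun x => x⁻¹ ^ m) (· ^ m) (fun _ => rfl)]
  exact FiniteField.sum_pow_lt_card_sub_one (K := ZMod p) m (by rwa [ZMod.card])

theorem sum_Icc_sum_Icc_inv_mul_inv (h : 3 < p) :
    ∑ i ∈ Icc 1 (p - 1), ∑ j ∈ Icc (i + 1) (p - 1), (i : ZMod p)⁻¹ * (j : ZMod p)⁻¹ = 0 := by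
  have htwo : (2 : ZMod p) ≠ 0 := by
    simpa using natCast_ne_zero_of_mem_Icc (p := p) (i := 2) (by simp only [mem_Icc]; omega)
  have hsum : ∑ i ∈ Icc 1 (p - 1), (i : ZMod p)⁻¹ = 0 := by
    simpa using sum_Icc_inv_pow_eq_zero (p := p) (m := 1) (by omega) (by omega)
  have htwice := two_mul_sum_Icc_sum_Icc_mul (fun i => (i : ZMod p)⁻¹) (p - 1)
  rw [hsum, sum_Icc_inv_pow_eq_zero (m := 2) (by omega) (by omega)] at htwice
  simpa [htwo] using htwice

theorem sum_Icc_sum_Icc_inv_sq (h : 3 < p) :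
    ∑ i ∈ Icc 1 (p - 1), ∑ _j ∈ Icc (i + 1) (p - 1), (i : ZMod p)⁻¹ ^ 2 = 0 := by
  have hrow : ∀ i ∈ Icc 1 (p - 1), ∑ _j ∈ Icc (i + 1) (p - 1), (i : ZMod p)⁻¹ ^ 2 =
      -((i : ZMod p)⁻¹ ^ 2) - (i : ZMod p)⁻¹ := by
    intro i hi
    have hinv := mul_inv_cancel₀ (natCast_ne_zero_of_mem_Icc hi)
    simp only [mem_Icc] at hi
    rw [sum_const, Nat.card_Icc, nsmul_eq_mul, show p - 1 + 1 - (i + 1) = p - (i + 1) by omega,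
      Nat.cast_sub (by omega), ZMod.natCast_self]
    push_cast
    linear_combination (-(i : ZMod p)⁻¹) * hinv
  rw [sum_congr rfl hrow, sum_sub_distrib, sum_neg_distrib,
    sum_Icc_inv_pow_eq_zero (m := 2) (by omega) (by omega)]
  simpa using sum_Icc_inv_pow_eq_zero (p := p) (m := 1) (by omega) (by omega)

theorem nestedPairSum_inv_eq_zero (h : 3 < p) :
    nestedPairSum (fun m => (m : ZMod p)⁻¹) (p - 1) = 0 := by
  have hterm : ∀ i ∈ Icc 1 (p - 1), ∀ j ∈ Icc (i + 1) (p - 1),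
      (p - 1 + 1 - j) •
          ((i : ZMod p)⁻¹ * (j : ZMod p)⁻¹ ^ 2 + (i : ZMod p)⁻¹ ^ 2 * (j : ZMod p)⁻¹) =
        -((i : ZMod p)⁻¹ * (j : ZMod p)⁻¹ + (i : ZMod p)⁻¹ ^ 2) := by
    intro i hi j hj
    have hj' : j ∈ Icc 1 (p - 1) := by simp only [mem_Icc] at hi hj ⊢; omega
    have hinv := mul_inv_cancel₀ (natCast_ne_zero_of_mem_Icc hj')
    simp only [mem_Icc] at hj'
    rw [nsmul_eq_mul, Nat.sub_add_cancel hp.out.one_le, Nat.cast_sub (by omega), ZMod.natCast_self]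
    linear_combination (-((i : ZMod p)⁻¹ * (j : ZMod p)⁻¹ + (i : ZMod p)⁻¹ ^ 2)) * hinv
  rw [nestedPairSum, sum_Icc_sum_Icc_sum_Icc_eq_sum_nsmul,
    sum_congr rfl fun i hi => sum_congr rfl (hterm i hi)]
  simp only [sum_neg_distrib, sum_add_distrib, sum_Icc_sum_Icc_inv_mul_inv h,
    sum_Icc_sum_Icc_inv_sq h, add_zero, neg_zero]

end ZModP

theorem map_ringInverse_of_isUnit {M₀ G₀ F : Type*} [MonoidWithZero M₀] [GroupWithZero G₀]
    [FunLike F M₀ G₀] [MonoidHomClass F M₀ G₀] (f : F) {x : M₀} (hx : IsUnit x) :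
    f x⁻¹ʳ = (f x)⁻¹ := by
  obtain ⟨u, rfl⟩ := hx
  rw [Ring.inverse_unit, map_units_inv]

namespace PadicInt

variable {p : ℕ} [hp : Fact p.Prime]

theorem isUnit_natCast_of_not_dvd {m : ℕ} (hm : ¬ p ∣ m) : IsUnit (m : ℤ_[p]) :=
  isUnit_iff.2 (norm_natCast_eq_one_iff.2 ((Nat.Prime.coprime_iff_not_dvd hp.out).2 hm))

theorem norm_le_inv_of_toZMod_eq_zero {x : ℤ_[p]} (hx : toZMod x = 0) :
    ‖x‖ ≤ (p : ℝ) ^ (-1 : ℤ) := by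
  rw [← RingHom.mem_ker, ker_toZMod, maximalIdeal_eq_span_p, ← pow_one (p : ℤ_[p]),
    ← norm_le_pow_iff_mem_span_pow] at hx
  exact_mod_cast hx

theorem map_nestedPairSum_ringInverse {K : Type*} [Field K] (f : ℤ_[p] →+* K) :
    f (nestedPairSum (fun m => (m : ℤ_[p])⁻¹ʳ) (p - 1)) =
      nestedPairSum (fun m => (m : K)⁻¹) (p - 1) := by
  rw [map_nestedPairSum]
  refine nestedPairSum_congr fun m hm => ?_
  simp only [mem_Icc] at hm
  rw [Function.comp_apply, map_ringInverse_of_isUnit f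
    (isUnit_natCast_of_not_dvd (Nat.not_dvd_of_pos_of_lt (by omega) (by omega))), map_natCast]

end PadicInt

theorem stmt_16 (p : ℕ) [hp : Fact p.Prime] (h : 3 < p) :
    ‖((∑ k ∈ Finset.Icc 1 (p - 1), ∑ i ∈ Finset.Icc 1 k, ∑ j ∈ Finset.Icc (i + 1) k,
          (1 / ((i : ℚ) * (j : ℚ) ^ 2) + 1 / ((i : ℚ) ^ 2 * j)) : ℚ) : ℚ_[p])‖
      ≤ (p : ℝ) ^ (-1 : ℤ) := by
  set x : ℤ_[p] := nestedPairSum (fun m => (m : ℤ_[p])⁻¹ʳ) (p - 1)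
  have hx : (x : ℚ_[p]) = nestedPairSum (fun m => (m : ℚ_[p])⁻¹) (p - 1) :=
    PadicInt.map_nestedPairSum_ringInverse PadicInt.Coe.ringHom
  have hres : PadicInt.toZMod x = 0 :=
    (PadicInt.map_nestedPairSum_ringInverse PadicInt.toZMod).trans (nestedPairSum_inv_eq_zero h)
  push_cast
  rw [← nestedPairSum_inv_eq_sum_one_div, ← hx, PadicInt.padic_norm_e_of_padicInt]
  exact PadicInt.norm_le_inv_of_toZMod_eq_zero hres
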